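/- arXiv:1808.02262 — 2 statements merged into one kernel-verified Lean document; each statement's English description precedes it below -/
import Mathlib

section
/- Let O be an order in a totally real number field K of degree d, and let α ∈ O^+ be totally positive. If α is represented over O by some Z-form (of any rank), then there exists a Z-form Q of rank at most d that represents α over O. Moreover, there exists a d-ary positive semidefinite quadratic form with integer coefficients that represents α over O. -/
open scoped BigOperators
open NumberField Matrix

noncomputable section

/-- Evaluation of an integer coefficient matrix as a quadratic form over a commutative ring. -/
def evalForm {r : ℕ} {R : Type*} [CommRing R] (a : Matrix (Fin r) (Fin r) ℤ) (v : Fin r → R) : R :=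
  ∑ i, ∑ j, (a i j : R) * v i * v j

/-- A `ℤ`-form: the associated real quadratic form is positive definite. -/
def IsPosDefForm {r : ℕ} (a : Matrix (Fin r) (Fin r) ℤ) : Prop :=
  ∀ v : Fin r → ℝ, v ≠ 0 → 0 < evalForm a v

/-- A form is classical if all its off-diagonal coefficients are even. -/
def IsClassicalForm {r : ℕ} (a : Matrix (Fin r) (Fin r) ℤ) : Prop :=
  ∀ i j, i ≠ j → (2 : ℤ) ∣ (a i j + a j i)

/-- An element of a field is totally positive if every real embedding sends it to
a positive real number. -/
def TotallyPositive {K : Type*} [Field K] (x : K) : Prop :=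
  ∀ σ : K →+* ℝ, 0 < σ x

/-- A `ℤ`-form is universal over the ring of integers of `K` if it represents every
totally positive algebraic integer of `K`. -/
def IsUniversal (K : Type*) [Field K] [NumberField K] {r : ℕ}
    (a : Matrix (Fin r) (Fin r) ℤ) : Prop :=
  ∀ α : 𝓞 K, TotallyPositive (α : K) → ∃ v : Fin r → 𝓞 K, evalForm a v = (α : 𝓞 K)

/-- A number field is totally real if all its complex embeddings have real image. -/
def IsTotallyRealField (K : Type*) [Field K] : Prop :=
  ∀ φ : K →+* ℂ, ∀ x : K, (φ x).im = 0

/-- The codifferent of the ring of integers of `K`. -/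
def Codifferent (K : Type*) [Field K] [NumberField K] : Set K :=
  {β : K | ∀ x : 𝓞 K, ∃ n : ℤ, Algebra.trace ℚ K (β * x) = n}

/-- The rational Gram matrix of an integral quadratic form. -/
def gramQ {r : ℕ} (a : Matrix (Fin r) (Fin r) ℤ) : Matrix (Fin r) (Fin r) ℚ :=
  (2 : ℚ)⁻¹ • (a.map (Int.cast : ℤ → ℚ) + (a.map (Int.cast : ℤ → ℚ))ᵀ)

/-- The value of the quadratic form with Gram matrix `G` at the integer vector `v`. -/
def qVal {ι : Type*} [Fintype ι] (G : Matrix ι ι ℚ) (v : ι → ℤ) : ℚ :=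
  dotProduct (fun i => (v i : ℚ)) (G.mulVec fun i => (v i : ℚ))

/-- The minimal vectors of the lattice with Gram matrix `G`. -/
def MinVecs {ι : Type*} [Fintype ι] (G : Matrix ι ι ℚ) : Set (ι → ℤ) :=
  {v | v ≠ 0 ∧ ∀ w : ι → ℤ, w ≠ 0 → qVal G v ≤ qVal G w}

/-- `m` is the minimum of the lattice with Gram matrix `G`. -/
def IsLatMin {ι : Type*} [Fintype ι] (G : Matrix ι ι ℚ) (m : ℚ) : Prop :=
  (∃ v : ι → ℤ, v ≠ 0 ∧ qVal G v = m) ∧ ∀ v : ι → ℤ, v ≠ 0 → m ≤ qVal G v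

/-- Positive definiteness of a rational Gram matrix. -/
def PosDefQMat {ι : Type*} [Fintype ι] (G : Matrix ι ι ℚ) : Prop :=
  ∀ x : ι → ℚ, x ≠ 0 → 0 < dotProduct x (G.mulVec x)

/-- A lattice (given by its rational Gram matrix `G`) is of `E`-type if for every classical
positive definite `ℤ`-lattice all minimal vectors of the tensor product are split. -/
def IsEType {ι : Type*} [Fintype ι] (G : Matrix ι ι ℚ) : Prop :=
  ∀ (s : ℕ) (N : Matrix (Fin s) (Fin s) ℤ), N.IsSymm →
    PosDefQMat (N.map (Int.cast : ℤ → ℚ)) →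
    ∀ z ∈ MinVecs (Matrix.kroneckerMap (· * ·) G (N.map (Int.cast : ℤ → ℚ))),
      ∃ v ∈ MinVecs G, ∃ u ∈ MinVecs (N.map (Int.cast : ℤ → ℚ)),
        z = fun p => v p.1 * u p.2

/-- The Gram matrix of the twisted trace form `t_δ` with respect to an integral
basis `ω` of the ring of integers. -/
def traceFormMat (K : Type*) [Field K] [NumberField K] {d : ℕ}
    (ω : Module.Basis (Fin d) ℤ (𝓞 K)) (δ : K) : Matrix (Fin d) (Fin d) ℚ :=
  fun i j => Algebra.trace ℚ K (δ * (ω i : K) * (ω j : K))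

/-!
The entries of a representing vector span a finitely generated torsion-free subgroup of `K`,
hence a free `ℤ`-module of rank `e ≤ d` with a basis `w` of integral combinations of the entries,
so `w` lies in `O`. Writing `v = C w` with an integer matrix `C` that has an integral left
inverse, the substituted form `a (C x)` is again positive definite, has rank `e` and takes the
value `α` at `w`. Padding it with `d - e` dummy variables gives the `d`-ary semidefinite form.
-/

lemma evalForm_eq_dotProduct {r : ℕ} {R : Type*} [CommRing R] (a : Matrix (Fin r) (Fin r) ℤ)
    (v : Fin r → R) : evalForm a v = v ⬝ᵥ (a.map (Int.castRingHom R) *ᵥ v) := by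
  simp only [evalForm, dotProduct, mulVec, Finset.mul_sum, map_apply, eq_intCast]
  exact Finset.sum_congr rfl fun i _ => Finset.sum_congr rfl fun j _ => by ring

lemma evalForm_transpose_mul_mul {r e : ℕ} {R : Type*} [CommRing R]
    (a : Matrix (Fin r) (Fin r) ℤ) (C : Matrix (Fin r) (Fin e) ℤ) (x : Fin e → R) :
    evalForm (Cᵀ * a * C) x = evalForm a (C.map (Int.castRingHom R) *ᵥ x) := by
  rw [evalForm_eq_dotProduct, evalForm_eq_dotProduct, Matrix.map_mul, Matrix.map_mul,
    ← mulVec_mulVec, ← mulVec_mulVec, dotProduct_mulVec, transpose_map, vecMul_transpose]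

lemma exists_intMatrix_basis_of_span {V : Type*} [AddCommGroup V] [Module ℚ V]
    [FiniteDimensional ℚ V] {r : ℕ} (v : Fin r → V) :
    ∃ e ≤ Module.finrank ℚ V, ∃ (C : Matrix (Fin r) (Fin e) ℤ) (D : Matrix (Fin e) (Fin r) ℤ),
      D * C = 1 ∧ ∀ i, v i = ∑ k, C i k • ∑ j, D k j • v j := by
  classical
  let M := Submodule.span ℤ (Set.range v)
  have := IsAddTorsionFree.of_module_rat V
  have := Module.Finite.span_of_finite ℤ (Set.finite_range v)
  let B := Module.finBasis ℤ M
  have hvM (i : Fin r) : v i ∈ M := Submodule.subset_span (Set.mem_range_self i)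
  choose D hD using fun k => (Submodule.mem_span_range_iff_exists_fun ℤ).mp (B k).2
  let C : Matrix (Fin r) (Fin (Module.finrank ℤ M)) ℤ := fun i k => B.repr ⟨v i, hvM i⟩ k
  have hB : LinearIndependent ℚ fun k => (B k : V) :=
    (LinearIndependent.iff_fractionRing ℤ ℚ).mp (B.linearIndependent.map' M.subtype M.ker_subtype)
  refine ⟨_, by simpa using hB.fintype_card_le_finrank, C, Matrix.of D, ?_, fun i => ?_⟩
  · ext k l
    have hBk : ∑ j, D k j • (⟨v j, hvM j⟩ : M) = B k := Subtype.ext (by simpa using hD k)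
    calc (Matrix.of D * C) k l = ∑ j, D k j * C j l := rfl
      _ = B.repr (∑ j, D k j • ⟨v j, hvM j⟩) l := by
          simp only [map_sum, map_zsmul, Finsupp.coe_finsetSum, Finsupp.coe_smul,
            Finset.sum_apply, Pi.smul_apply, smul_eq_mul, C]
      _ = (1 : Matrix _ _ ℤ) k l := by
          rw [hBk, B.repr_self, Finsupp.single_apply, Matrix.one_apply]
  · have hv := congrArg Subtype.val (B.sum_repr ⟨v i, hvM i⟩)
    simp only [Submodule.coe_sum, Submodule.coe_smul] at hv
    simp_rw [Matrix.of_apply, hD]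
    exact hv.symm

lemma IsPosDefForm.evalForm_nonneg {r : ℕ} {a : Matrix (Fin r) (Fin r) ℤ} (ha : IsPosDefForm a)
    (v : Fin r → ℝ) : 0 ≤ evalForm a v := by
  rcases eq_or_ne v 0 with rfl | hv
  · simp [evalForm]
  · exact (ha v hv).le

lemma IsPosDefForm.transpose_mul_mul {r e : ℕ} {a : Matrix (Fin r) (Fin r) ℤ}
    (ha : IsPosDefForm a) {C : Matrix (Fin r) (Fin e) ℤ} {D : Matrix (Fin e) (Fin r) ℤ}
    (hDC : D * C = 1) : IsPosDefForm (Cᵀ * a * C) := by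
  intro x hx
  rw [evalForm_transpose_mul_mul]
  refine ha _ fun hCx => hx ?_
  calc x = (D * C).map (Int.castRingHom ℝ) *ᵥ x := by simp [hDC]
    _ = 0 := by rw [Matrix.map_mul, ← mulVec_mulVec, hCx, mulVec_zero]

lemma mulVec_map_intCast_mem {m n : Type*} [Fintype n] {R σ : Type*} [Ring R] [SetLike σ R]
    [SubringClass σ R] {S : σ} (C : Matrix m n ℤ) {w : n → R} (hw : ∀ k, w k ∈ S) (i : m) :
    (C.map (Int.castRingHom R) *ᵥ w) i ∈ S :=
  sum_mem fun k _ => mul_mem (by simp) (hw k)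

lemma submatrix_one_mul_transpose {m n α : Type*} [Fintype n] [DecidableEq m] [DecidableEq n]
    [Semiring α] {f : m → n} (hf : Function.Injective f) :
    (1 : Matrix n n α).submatrix f id * ((1 : Matrix n n α).submatrix f id)ᵀ = 1 := by
  rw [transpose_submatrix, transpose_one, ← submatrix_mul _ _ _ _ _ Function.bijective_id,
    mul_one, submatrix_one _ hf]

lemma exists_posDef_rank_le_finrank {R σ : Type*} [CommRing R] [Algebra ℚ R]
    [FiniteDimensional ℚ R] [SetLike σ R] [SubringClass σ R] {S : σ} {r : ℕ}
    {a : Matrix (Fin r) (Fin r) ℤ} (ha : IsPosDefForm a) {v : Fin r → R} (hv : ∀ i, v i ∈ S) :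
    ∃ e ≤ Module.finrank ℚ R, ∃ b : Matrix (Fin e) (Fin e) ℤ, IsPosDefForm b ∧
      ∃ w : Fin e → R, (∀ k, w k ∈ S) ∧ evalForm b w = evalForm a v := by
  obtain ⟨e, he, C, D, hDC, hCD⟩ := exists_intMatrix_basis_of_span v
  have hvw : v = C.map (Int.castRingHom R) *ᵥ (D.map (Int.castRingHom R) *ᵥ v) := by
    ext i
    simpa [mulVec, dotProduct, zsmul_eq_mul, Finset.mul_sum] using hCD i
  refine ⟨e, he, Cᵀ * a * C, ha.transpose_mul_mul hDC, _,
    mulVec_map_intCast_mem D hv, ?_⟩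
  rw [evalForm_transpose_mul_mul, ← hvw]

lemma exists_posSemidef_of_rank_le {R σ : Type*} [CommRing R] [SetLike σ R] [SubringClass σ R]
    {S : σ} {e n : ℕ} (he : e ≤ n) {b : Matrix (Fin e) (Fin e) ℤ} (hb : IsPosDefForm b)
    {w : Fin e → R} (hw : ∀ k, w k ∈ S) :
    ∃ a : Matrix (Fin n) (Fin n) ℤ, (∀ x : Fin n → ℝ, 0 ≤ evalForm a x) ∧
      ∃ v : Fin n → R, (∀ i, v i ∈ S) ∧ evalForm a v = evalForm b w := by
  let P : Matrix (Fin e) (Fin n) ℤ := (1 : Matrix (Fin n) (Fin n) ℤ).submatrix (Fin.castLE he) id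
  have hP : P * Pᵀ = 1 := submatrix_one_mul_transpose (Fin.castLE_injective he)
  refine ⟨Pᵀ * b * P, fun x => ?_, _, mulVec_map_intCast_mem Pᵀ hw, ?_⟩
  · rw [evalForm_transpose_mul_mul]
    exact hb.evalForm_nonneg _
  · rw [evalForm_transpose_mul_mul, mulVec_mulVec, ← Matrix.map_mul, hP]
    simp

theorem represented_by_small_rank_ZForm_general
    (K : Type*) [Field K] [NumberField K]
    (O : Subalgebra ℤ K)
    (α : K)
    (hrep : ∃ (r : ℕ) (a : Matrix (Fin r) (Fin r) ℤ), IsPosDefForm a ∧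
      ∃ v : Fin r → K, (∀ i, v i ∈ O) ∧ evalForm a v = α) :
    (∃ r : ℕ, r ≤ Module.finrank ℚ K ∧
      ∃ a : Matrix (Fin r) (Fin r) ℤ, IsPosDefForm a ∧
        ∃ v : Fin r → K, (∀ i, v i ∈ O) ∧ evalForm a v = α) ∧
    (∃ a₀ : Matrix (Fin (Module.finrank ℚ K)) (Fin (Module.finrank ℚ K)) ℤ,
      (∀ v : Fin (Module.finrank ℚ K) → ℝ, 0 ≤ evalForm a₀ v) ∧
        ∃ v : Fin (Module.finrank ℚ K) → K, (∀ i, v i ∈ O) ∧ evalForm a₀ v = α) := by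
  obtain ⟨r, a, ha, v, hvO, rfl⟩ := hrep
  obtain ⟨e, he, b, hb, w, hwO, hbw⟩ := exists_posDef_rank_le_finrank ha hvO
  refine ⟨⟨e, he, b, hb, w, hwO, hbw⟩, ?_⟩
  simpa only [hbw] using exists_posSemidef_of_rank_le he hb hwO

/-- If a totally positive element `α` of an order `O` in a totally real
number field of degree `d` is represented over `O` by some `ℤ`-form, then it is represented
over `O` by a `ℤ`-form of rank at most `d`; moreover it is represented over `O` by some
`d`-ary positive semidefinite quadratic form with integer coefficients. -/
theorem represented_by_small_rank_ZForm
    (K : Type*) [Field K] [NumberField K]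
    (htr : IsTotallyRealField K)
    (O : Subalgebra ℤ K)
    (hfg : (Subalgebra.toSubmodule O).FG)
    (hfull : Submodule.span ℚ (O : Set K) = ⊤)
    (α : K) (hαO : α ∈ O) (hαpos : TotallyPositive α)
    (hrep : ∃ (r : ℕ) (a : Matrix (Fin r) (Fin r) ℤ), IsPosDefForm a ∧
      ∃ v : Fin r → K, (∀ i, v i ∈ O) ∧ evalForm a v = α) :
    (∃ r : ℕ, r ≤ Module.finrank ℚ K ∧
      ∃ a : Matrix (Fin r) (Fin r) ℤ, IsPosDefForm a ∧
        ∃ v : Fin r → K, (∀ i, v i ∈ O) ∧ evalForm a v = α) ∧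
    (∃ a₀ : Matrix (Fin (Module.finrank ℚ K)) (Fin (Module.finrank ℚ K)) ℤ,
      (∀ v : Fin (Module.finrank ℚ K) → ℝ, 0 ≤ evalForm a₀ v) ∧
        ∃ v : Fin (Module.finrank ℚ K) → K, (∀ i, v i ∈ O) ∧ evalForm a₀ v = α) :=
  represented_by_small_rank_ZForm_general K O α hrep
end
end

section
/- Let K be a totally real number field of degree d with ring of integers O_K and fixed integral basis ω₁,…,ω_d, let Q be a Z-form of rank r, and let δ ∈ O_K^{∨,+} be such that the form t_δ is of E-type. Assume an indecomposable element α ∈ O_K^+ is represented by Q over O_K and satisfies Tr_{K/Q}(δα) = min(t_δ ⊗ Q). Then α is a square in O_K and min(Q) = 1. -/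
open scoped BigOperators
open NumberField Matrix

noncomputable section

/-!
Write `α = Q(w)` with `w ∈ O_K^r` and let `x ∈ ℤ^d ⊗ ℤ^r` be the coordinate vector of `w` in the
basis `ω`. Then `(t_δ ⊗ Q)(x) = Tr(δ Q(w)) = Tr(δα)`, so `x` is a minimal vector of `t_δ ⊗ Q`.
Since `t_δ` is of `E`-type, `x = v ⊗ u` splits, i.e. `w = u β` with `β = ∑ vᵢ ωᵢ` and `u ∈ ℤ^r`,
whence `α = Q(u) β²`. As `Q(u) ≥ 1` is an integer and `β² ≫ 0`, `Q(u) ≥ 2` would give the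
decomposition `α = β² + (Q(u) - 1) β²`; hence `Q(u) = 1`, `α = β²` and `min Q = 1`.
-/

section Forms

variable {r : ℕ}

theorem map_evalForm {R S : Type*} [CommRing R] [CommRing S] (f : R →+* S)
    (a : Matrix (Fin r) (Fin r) ℤ) (v : Fin r → R) :
    f (evalForm a v) = evalForm a (fun i => f (v i)) := by
  simp [evalForm, map_sum]

theorem intCast_evalForm {R : Type*} [CommRing R] (a : Matrix (Fin r) (Fin r) ℤ)
    (v : Fin r → ℤ) : ((evalForm a v : ℤ) : R) = evalForm a (fun i => (v i : R)) :=
  map_evalForm (Int.castRingHom R) a v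

theorem evalForm_zero {R : Type*} [CommRing R] (a : Matrix (Fin r) (Fin r) ℤ) :
    evalForm a (0 : Fin r → R) = 0 := by
  simp [evalForm]

theorem evalForm_smul {R : Type*} [CommRing R] (a : Matrix (Fin r) (Fin r) ℤ) (u : Fin r → ℤ)
    (β : R) : evalForm a (fun k => u k • β) = evalForm a u • β ^ 2 := by
  simp only [evalForm, zsmul_eq_mul, Int.cast_sum, Int.cast_mul, Finset.sum_mul]
  exact Finset.sum_congr rfl fun k _ => Finset.sum_congr rfl fun l _ => by push_cast; ring

theorem IsPosDefForm.one_le_evalForm {a : Matrix (Fin r) (Fin r) ℤ} (ha : IsPosDefForm a)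
    {v : Fin r → ℤ} (hv : v ≠ 0) : 1 ≤ evalForm a v := by
  have hv' : (fun i => (v i : ℝ)) ≠ 0 := fun h =>
    hv (funext fun i => by simpa using congrFun h i)
  have h := ha _ hv'
  rw [← intCast_evalForm] at h
  exact Int.cast_pos.mp h

theorem IsPosDefForm.evalForm_pos {a : Matrix (Fin r) (Fin r) ℤ} (ha : IsPosDefForm a)
    {x : Fin r → ℚ} (hx : x ≠ 0) : 0 < evalForm a x := by
  have hx' : (fun i => (x i : ℝ)) ≠ 0 := fun h =>
    hx (funext fun i => by simpa using congrFun h i)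
  have h : 0 < Rat.castHom ℝ (evalForm a x) := by rw [map_evalForm]; exact ha _ hx'
  exact Rat.cast_pos.mp h

theorem gramQ_apply (a : Matrix (Fin r) (Fin r) ℤ) (k l : Fin r) :
    gramQ a k l = 2⁻¹ * (a k l + a l k) := by
  simp [gramQ]

theorem sum_gramQ_mul_of_symm (a : Matrix (Fin r) (Fin r) ℤ) (b : Fin r → Fin r → ℚ)
    (hb : ∀ k l, b k l = b l k) :
    ∑ k, ∑ l, gramQ a k l * b k l = ∑ k, ∑ l, (a k l : ℚ) * b k l := by
  have hswap : ∑ k, ∑ l, (a l k : ℚ) * b k l = ∑ k, ∑ l, (a k l : ℚ) * b k l := by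
    rw [Finset.sum_comm]
    simp only [hb]
  simp only [gramQ_apply, mul_assoc, add_mul, Finset.sum_add_distrib, ← Finset.mul_sum, hswap]
  ring

theorem dotProduct_gramQ_mulVec (a : Matrix (Fin r) (Fin r) ℤ) (x : Fin r → ℚ) :
    x ⬝ᵥ (gramQ a *ᵥ x) = evalForm a x := by
  have h : x ⬝ᵥ (a.map (Int.cast : ℤ → ℚ) *ᵥ x) = evalForm a x := by
    simp only [dotProduct, mulVec, evalForm, Finset.mul_sum, map_apply]
    exact Finset.sum_congr rfl fun k _ => Finset.sum_congr rfl fun l _ => by ring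
  rw [gramQ, smul_mulVec, add_mulVec, dotProduct_smul, dotProduct_add, mulVec_transpose,
    dotProduct_comm x (x ᵥ* _), ← dotProduct_mulVec, h, smul_eq_mul]
  ring

theorem qVal_gramQ (a : Matrix (Fin r) (Fin r) ℤ) (v : Fin r → ℤ) :
    qVal (gramQ a) v = evalForm a v := by
  rw [qVal, dotProduct_gramQ_mulVec, intCast_evalForm]

theorem IsPosDefForm.isLatMin_gramQ {a : Matrix (Fin r) (Fin r) ℤ} (ha : IsPosDefForm a)
    {u : Fin r → ℤ} (hu : u ≠ 0) (hu1 : evalForm a u = 1) : IsLatMin (gramQ a) 1 :=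
  ⟨⟨u, hu, by rw [qVal_gramQ, hu1, Int.cast_one]⟩,
    fun v hv => by rw [qVal_gramQ]; exact_mod_cast ha.one_le_evalForm hv⟩

theorem map_add_transpose_eq_two_smul_gramQ (a : Matrix (Fin r) (Fin r) ℤ) :
    (a + aᵀ).map (Int.cast : ℤ → ℚ) = (2 : ℚ) • gramQ a := by
  rw [gramQ, smul_smul]
  norm_num [Matrix.map_add, transpose_map]

theorem IsPosDefForm.posDefQMat_add_transpose {a : Matrix (Fin r) (Fin r) ℤ}
    (ha : IsPosDefForm a) : PosDefQMat ((a + aᵀ).map (Int.cast : ℤ → ℚ)) := fun x hx => by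
  rw [map_add_transpose_eq_two_smul_gramQ, smul_mulVec, dotProduct_smul,
    dotProduct_gramQ_mulVec, smul_eq_mul]
  exact mul_pos two_pos (ha.evalForm_pos hx)

end Forms

section Lattices

variable {ι κ : Type*} [Fintype ι] [Fintype κ]

theorem qVal_smul (c : ℚ) (G : Matrix ι ι ℚ) (v : ι → ℤ) : qVal (c • G) v = c * qVal G v := by
  rw [qVal, smul_mulVec, dotProduct_smul, smul_eq_mul, qVal]

theorem minVecs_smul {c : ℚ} (hc : 0 < c) (G : Matrix ι ι ℚ) : MinVecs (c • G) = MinVecs G := by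
  ext v
  simp only [MinVecs, Set.mem_ofPred_eq, qVal_smul, mul_le_mul_iff_of_pos_left hc]

theorem IsLatMin.mem_minVecs {G : Matrix ι ι ℚ} {m : ℚ} (hG : IsLatMin G m) {v : ι → ℤ}
    (hv : v ≠ 0) (hvm : qVal G v = m) : v ∈ MinVecs G :=
  ⟨hv, fun w hw => hvm ▸ hG.2 w hw⟩

theorem qVal_kroneckerMap (G : Matrix ι ι ℚ) (H : Matrix κ κ ℚ) (x : ι × κ → ℤ) :
    qVal (kroneckerMap (· * ·) G H) x =
      ∑ k, ∑ l, H k l * ∑ i, ∑ j, (x (i, k) : ℚ) * G i j * x (j, l) := by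
  simp only [qVal, dotProduct, mulVec, Fintype.sum_prod_type, kroneckerMap_apply, Finset.mul_sum]
  rw [Finset.sum_comm]
  refine Finset.sum_congr rfl fun k _ => ?_
  conv_rhs => rw [Finset.sum_comm]
  refine Finset.sum_congr rfl fun i _ => ?_
  rw [Finset.sum_comm]
  exact Finset.sum_congr rfl fun l _ => Finset.sum_congr rfl fun j _ => by ring

theorem IsEType.exists_eq_of_mem_minVecs_gramQ {G : Matrix ι ι ℚ} (hE : IsEType G) {r : ℕ}
    {a : Matrix (Fin r) (Fin r) ℤ} (ha : IsPosDefForm a) {z : ι × Fin r → ℤ}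
    (hz : z ∈ MinVecs (kroneckerMap (· * ·) G (gramQ a))) :
    ∃ v ∈ MinVecs G, ∃ u ∈ MinVecs (gramQ a), z = fun p => v p.1 * u p.2 := by
  have h := hE r (a + aᵀ) (isSymm_add_transpose_self a) ha.posDefQMat_add_transpose z
  rw [map_add_transpose_eq_two_smul_gramQ, minVecs_smul two_pos,
    kroneckerMap_smul_right _ _ (fun _ _ => mul_smul_comm _ _ _), minVecs_smul two_pos] at h
  exact h hz

end Lattices

section Coordinates

variable {R M ι κ : Type*} [CommSemiring R] [AddCommMonoid M] [Module R M]

def basisCoords (b : Module.Basis ι R M) (w : κ → M) : ι × κ → R :=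
  fun p => b.repr (w p.2) p.1

theorem basisCoords_ne_zero (b : Module.Basis ι R M) {w : κ → M} (hw : w ≠ 0) :
    basisCoords b w ≠ 0 := fun h =>
  hw <| funext fun k => b.repr.injective <| Finsupp.ext fun i => by
    simpa [basisCoords] using congrFun h (i, k)

theorem eq_smul_of_basisCoords_eq [Fintype ι] (b : Module.Basis ι R M) {w : κ → M} {v : ι → R}
    {u : κ → R} (h : basisCoords b w = fun p => v p.1 * u p.2) (k : κ) :
    w k = u k • b.equivFun.symm v :=
  b.repr.injective <| Finsupp.ext fun i => by
    rw [map_smul, Finsupp.smul_apply, b.equivFun_symm_apply, b.repr_sum_self, smul_eq_mul, mul_comm]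
    exact congrFun h (i, k)

end Coordinates

section TraceForm

theorem trace_mul_evalForm {S : Type*} [CommRing S] [Algebra ℚ S] {r : ℕ} (δ : S)
    (a : Matrix (Fin r) (Fin r) ℤ) (y : Fin r → S) :
    Algebra.trace ℚ S (δ * evalForm a y) =
      ∑ k, ∑ l, (a k l : ℚ) * Algebra.trace ℚ S (δ * y k * y l) := by
  simp only [evalForm, Finset.mul_sum, map_sum]
  refine Finset.sum_congr rfl fun k _ => Finset.sum_congr rfl fun l _ => ?_
  rw [show δ * ((a k l : S) * y k * y l) = a k l • (δ * y k * y l) by rw [zsmul_eq_mul]; ring,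
    map_zsmul, zsmul_eq_mul]

variable {K : Type*} [Field K] [NumberField K] {d : ℕ}

theorem trace_mul_mul_eq_sum_repr (ω : Module.Basis (Fin d) ℤ (𝓞 K)) (δ : K) (y z : 𝓞 K) :
    Algebra.trace ℚ K (δ * y * z) =
      ∑ i, ∑ j, (ω.repr y i : ℚ) * traceFormMat K ω δ i j * ω.repr z j := by
  have hcoe : ∀ y : 𝓞 K, (y : K) = ∑ i, (ω.repr y i : K) * ω i := fun y => by
    conv_lhs => rw [← ω.sum_repr y]
    simp [map_sum, zsmul_eq_mul]
  simp only [traceFormMat]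
  rw [hcoe y, hcoe z]
  simp only [Finset.mul_sum, Finset.sum_mul, map_sum]
  rw [Finset.sum_comm]
  refine Finset.sum_congr rfl fun i _ => Finset.sum_congr rfl fun j _ => ?_
  rw [show δ * ((ω.repr y i : K) * ω i) * ((ω.repr z j : K) * ω j) =
      (ω.repr y i * ω.repr z j) • (δ * ω i * ω j) by rw [zsmul_eq_mul]; push_cast; ring,
    map_zsmul, zsmul_eq_mul]
  push_cast
  ring

theorem trace_mul_evalForm_eq_qVal {r : ℕ} (ω : Module.Basis (Fin d) ℤ (𝓞 K)) (δ : K)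
    (a : Matrix (Fin r) (Fin r) ℤ) (w : Fin r → 𝓞 K) :
    Algebra.trace ℚ K (δ * ((evalForm a w : 𝓞 K) : K)) =
      qVal (kroneckerMap (· * ·) (traceFormMat K ω δ) (gramQ a)) (basisCoords ω w) := by
  rw [qVal_kroneckerMap, RingOfIntegers.coe_eq_algebraMap, map_evalForm, trace_mul_evalForm]
  simp only [basisCoords, ← trace_mul_mul_eq_sum_repr]
  exact (sum_gramQ_mul_of_symm a _ fun k l => by ring_nf).symm

end TraceForm

section Indecomposable

variable {K : Type*} [Field K]

theorem totallyPositive_intCast_mul_sq {m : ℤ} (hm : 0 < m) {x : K} (hx : x ≠ 0) :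
    TotallyPositive ((m : K) * x ^ 2) := fun σ => by
  rw [map_mul, map_pow, map_intCast]
  exact mul_pos (Int.cast_pos.mpr hm) (sq_pos_of_ne_zero ((map_ne_zero σ).mpr hx))

theorem ne_zero_of_not_exists_add {α : 𝓞 K} (hα : TotallyPositive (α : K))
    (hind : ¬ ∃ β γ : 𝓞 K, TotallyPositive (β : K) ∧ TotallyPositive (γ : K) ∧ α = β + γ) :
    α ≠ 0 := by
  rintro rfl
  exact hind ⟨0, 0, hα, hα, (add_zero 0).symm⟩

theorem eq_one_of_eq_intCast_mul_sq {α β : 𝓞 K} {m : ℤ} (hm : 1 ≤ m) (hβ : β ≠ 0)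
    (hαβ : α = m * β ^ 2)
    (hind : ¬ ∃ β γ : 𝓞 K, TotallyPositive (β : K) ∧ TotallyPositive (γ : K) ∧ α = β + γ) :
    m = 1 := by
  by_contra hm1
  have hβK : (β : K) ≠ 0 := by exact_mod_cast hβ
  refine hind ⟨β ^ 2, ((m - 1 : ℤ) : 𝓞 K) * β ^ 2, ?_, ?_, ?_⟩
  · simpa using totallyPositive_intCast_mul_sq one_pos hβK
  · simpa using totallyPositive_intCast_mul_sq (by omega : 0 < m - 1) hβK
  · rw [hαβ]
    push_cast
    ring

end Indecomposable

theorem indecomposable_at_minimum_is_square_general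
    (K : Type*) [Field K] [NumberField K]
    (d : ℕ) (ω : Module.Basis (Fin d) ℤ (𝓞 K))
    (δ : K)
    (hE : IsEType (traceFormMat K ω δ))
    (r : ℕ) (a : Matrix (Fin r) (Fin r) ℤ) (ha : IsPosDefForm a)
    (α : 𝓞 K) (hαpos : TotallyPositive (α : K))
    (hind : ¬ ∃ β γ : 𝓞 K, TotallyPositive (β : K) ∧ TotallyPositive (γ : K) ∧ α = β + γ)
    (hrep : ∃ v : Fin r → 𝓞 K, evalForm a v = α)
    (hmin : IsLatMin (Matrix.kroneckerMap (· * ·) (traceFormMat K ω δ) (gramQ a))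
      (Algebra.trace ℚ K (δ * (α : K)))) :
    (∃ γ : 𝓞 K, α = γ ^ 2) ∧ IsLatMin (gramQ a) 1 := by
  obtain ⟨w, rfl⟩ := hrep
  have hα0 := ne_zero_of_not_exists_add hαpos hind
  have hw : w ≠ 0 := by
    rintro rfl
    exact hα0 (evalForm_zero a)
  have hx := hmin.mem_minVecs (basisCoords_ne_zero ω hw) (trace_mul_evalForm_eq_qVal ω δ a w).symm
  obtain ⟨v, -, u, hu, hvu⟩ := hE.exists_eq_of_mem_minVecs_gramQ ha hx
  set β := ω.equivFun.symm v
  have hαβ : evalForm a w = ((evalForm a u : ℤ) : 𝓞 K) * β ^ 2 := by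
    rw [show w = fun k => u k • β from funext (eq_smul_of_basisCoords_eq ω hvu), evalForm_smul,
      zsmul_eq_mul]
  have hβ : β ≠ 0 := by
    rintro hβ
    rw [hβ, zero_pow two_ne_zero, mul_zero] at hαβ
    exact hα0 hαβ
  have hu1 := eq_one_of_eq_intCast_mul_sq (ha.one_le_evalForm hu.1) hβ hαβ hind
  exact ⟨⟨β, by rw [hαβ, hu1, Int.cast_one, one_mul]⟩, ha.isLatMin_gramQ hu.1 hu1⟩

/-- Let `δ` be a totally positive element of the codifferent such that the
twisted trace form `t_δ` is of `E`-type, and let `Q` be a `ℤ`-form. If an indecomposable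
totally positive integer `α` is represented by `Q` over `O_K` and
`Tr(δα) = min(t_δ ⊗ Q)`, then `α` is a square in `O_K` and `min(Q) = 1`. -/
theorem indecomposable_at_minimum_is_square
    (K : Type*) [Field K] [NumberField K]
    (htr : IsTotallyRealField K)
    (d : ℕ) (ω : Module.Basis (Fin d) ℤ (𝓞 K))
    (δ : K) (hδ : δ ∈ Codifferent K) (hδpos : TotallyPositive δ)
    (hE : IsEType (traceFormMat K ω δ))
    (r : ℕ) (a : Matrix (Fin r) (Fin r) ℤ) (ha : IsPosDefForm a)
    (α : 𝓞 K) (hαpos : TotallyPositive (α : K))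
    (hind : ¬ ∃ β γ : 𝓞 K, TotallyPositive (β : K) ∧ TotallyPositive (γ : K) ∧ α = β + γ)
    (hrep : ∃ v : Fin r → 𝓞 K, evalForm a v = α)
    (hmin : IsLatMin (Matrix.kroneckerMap (· * ·) (traceFormMat K ω δ) (gramQ a))
      (Algebra.trace ℚ K (δ * (α : K)))) :
    (∃ γ : 𝓞 K, α = γ ^ 2) ∧ IsLatMin (gramQ a) 1 :=
  indecomposable_at_minimum_is_square_general K d ω δ hE r a ha α hαpos hind hrep hmin

end
end
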